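/- Consequently the spectrum of H_{(k,1)}(q) = Σ_{p=1}^{k+1} ρ_{(k,1)}(σ_p) - (qk - q^{-1})·1 is {2cos(πm/(k+2)) : m = 1,...,k+1}, independent of the generic parameter q. -/

import Mathlib

open Finset Matrix

/-! Let `C = C(q)` be the upper bidiagonal matrix `Cmat`. Then `Cᵀ H_{(k,1)}(q) = H^∞ Cᵀ`, where
`H^∞` is the adjacency matrix of the path on `k + 1` vertices: comparing entries only uses the
recurrence `(n+2)_q = (q + q⁻¹)(n+1)_q - (n)_q` and `(0)_q = 0`. Since `C` is invertible for generic
`q`, the spectrum of `H_{(k,1)}(q)` is that of `H^∞`. With `θ = πm/(k+2)`, the vector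
`(sin((j+1)θ))_j` is an eigenvector of `H^∞` for `2 cos θ`, because `sin(jθ) + sin((j+2)θ) =
2 cos θ sin((j+1)θ)` and `sin((k+2)θ) = 0`. For `m = 1, …, k+1` these are `k + 1` distinct
eigenvalues, so they are the whole spectrum. -/

/-- The `q`-number `(m)_q = (q^m - q^{-m})/(q - q^{-1})`. -/
noncomputable def qnum (q : ℂ) (m : ℕ) : ℂ := (q ^ m - q⁻¹ ^ m) / (q - q⁻¹)

/-- The matrix unit `e_{i,j}` on the span of `v_2, ..., v_{k+2}` (zero if a label lies
outside `{2, ..., k+2}`); `v_{a+2}` corresponds to the index `a : Fin (k+1)`. -/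
def E (k i j : ℕ) : Matrix (Fin (k+1)) (Fin (k+1)) ℂ :=
  Matrix.of fun a b => if (a : ℕ) + 2 = i ∧ (b : ℕ) + 2 = j then 1 else 0

/-- The corner representation `ρ_{(k,1)}` of the Hecke algebra `H_{k+2}`. -/
noncomputable def rho (k : ℕ) (q : ℂ) (p : ℕ) : Matrix (Fin (k+1)) (Fin (k+1)) ℂ :=
  q • 1 + (qnum q (p-1) / qnum q p) • (E k p (p+1) - E k p p)
        + (qnum q (p+1) / qnum q p) • (E k (p+1) p - E k (p+1) (p+1))

/-- The traceless Hamiltonian `H_{(k,1)}(q)`. -/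
noncomputable def HH (k : ℕ) (q : ℂ) : Matrix (Fin (k+1)) (Fin (k+1)) ℂ :=
  (∑ p ∈ Finset.Icc 2 (k+1),
      ((qnum q (p+1) / qnum q p) • E k p (p+1) + (qnum q (p-1) / qnum q p) • E k (p+1) p
        - (1 / (qnum q p * qnum q (p-1))) • E k p p))
    + (qnum q k / qnum q (k+1)) • E k (k+2) (k+2)

/-- The upper triangular matrix `C(q)`. -/
noncomputable def Cmat (k : ℕ) (q : ℂ) : Matrix (Fin (k+1)) (Fin (k+1)) ℂ :=
  (∑ p ∈ Finset.Icc 2 (k+2), (qnum q (p-1))⁻¹ • E k p p)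
    - (∑ p ∈ Finset.Icc 2 (k+1), (qnum q p)⁻¹ • E k p (p+1))

/-- The `q → ∞` limit Hamiltonian `H^∞ = Σ_{p=2}^{k+1} (e_{p,p+1} + e_{p+1,p})`,
the adjacency matrix of the path (type `A`) Dynkin diagram. -/
noncomputable def Hinf (k : ℕ) : Matrix (Fin (k+1)) (Fin (k+1)) ℂ :=
  ∑ p ∈ Finset.Icc 2 (k+1), (E k p (p+1) + E k (p+1) p)

theorem spectrum_eq_of_mul_eq_mul {R A : Type*} [CommSemiring R] [Ring A] [Algebra R A]
    {a b p : A} (hp : IsUnit p) (h : p * a = b * p) : spectrum R a = spectrum R b := by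
  obtain ⟨u, rfl⟩ := hp
  rw [← spectrum.units_conjugate' (a := b) (u := u), mul_assoc, ← h, ← mul_assoc, Units.inv_mul,
    one_mul]

namespace Matrix

variable {n K : Type*} [Fintype n] [DecidableEq n] [Field K]

theorem mem_spectrum_of_mulVec_eq_smul {A : Matrix n n K} {v : n → K} {μ : K} (hv : v ≠ 0)
    (h : A *ᵥ v = μ • v) : μ ∈ spectrum K A := by
  rw [spectrum.mem_iff, isUnit_iff_isUnit_det, isUnit_iff_ne_zero, not_not,
    ← exists_mulVec_eq_zero_iff]
  exact ⟨v, hv, by rw [sub_mulVec, h, Algebra.algebraMap_eq_smul_one, smul_mulVec, one_mulVec,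
    sub_self]⟩

theorem spectrum_eq_of_card_le {A : Matrix n n K} {S : Finset K}
    (hS : (S : Set K) ⊆ spectrum K A) (hcard : Fintype.card n ≤ S.card) :
    spectrum K A = S := by
  classical
  have hroots : spectrum K A = A.charpoly.roots.toFinset := by
    ext μ
    simp [mem_spectrum_iff_isRoot_charpoly, A.charpoly_monic.ne_zero]
  have hle : A.charpoly.roots.toFinset.card ≤ S.card :=
    (Multiset.toFinset_card_le _).trans <| (Polynomial.card_roots' _).trans <|
      A.charpoly_natDegree_eq_dim.le.trans hcard
  rw [hroots, Finset.eq_of_subset_of_card_le (by rwa [hroots, Finset.coe_subset] at hS) hle]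

end Matrix

theorem Fin.sum_ite_val_eq_val_add_one {R : Type*} [AddCommMonoid R] {n : ℕ} (a : Fin n)
    (g : Fin n → R) :
    ∑ c : Fin n, (if (a : ℕ) = c + 1 then g c else 0) =
      if h : (a : ℕ) = 0 then 0 else g ⟨a - 1, by omega⟩ := by
  split_ifs with h
  · exact Finset.sum_eq_zero fun c _ => if_neg (by omega)
  · rw [Finset.sum_eq_single ⟨a - 1, by omega⟩, if_pos (by simp; omega)]
    · exact fun c _ hc => if_neg fun h' => hc (Fin.ext (by simp; omega))
    · simp

theorem Fin.sum_ite_val_add_one_eq_val {R : Type*} [AddCommMonoid R] {n : ℕ} (a : Fin n)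
    (g : Fin n → R) :
    ∑ c : Fin n, (if (c : ℕ) = a + 1 then g c else 0) =
      if h : (a : ℕ) + 1 < n then g ⟨a + 1, h⟩ else 0 := by
  split_ifs with h
  · rw [Finset.sum_eq_single ⟨a + 1, h⟩, if_pos rfl]
    · exact fun c _ hc => if_neg fun h' => hc (Fin.ext h')
    · simp
  · exact Finset.sum_eq_zero fun c _ => if_neg (by omega)

theorem sum_Icc_smul_E_apply (k m n i j : ℕ) (f : ℕ → ℂ) (a b : Fin (k+1)) :
    (∑ p ∈ Icc m n, f p • E k (p + i) (p + j)) a b =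
      if m + i ≤ a + 2 ∧ a + 2 ≤ n + i ∧ (b : ℕ) + i = a + j then f (a + 2 - i) else 0 := by
  simp only [Matrix.sum_apply, Matrix.smul_apply, E, of_apply, smul_eq_mul, mul_ite, mul_one,
    mul_zero]
  split_ifs with h
  · rw [Finset.sum_eq_single (a + 2 - i), if_pos (by omega)]
    · exact fun p _ hp => if_neg (by omega)
    · exact fun hp => absurd (Finset.mem_Icc.2 (by omega)) hp
  · refine Finset.sum_eq_zero fun p hp => if_neg ?_
    rw [Finset.mem_Icc] at hp
    omega

theorem Hinf_apply (k : ℕ) (a b : Fin (k+1)) :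
    Hinf k a b = (if (b : ℕ) = a + 1 then 1 else 0) + (if (a : ℕ) = b + 1 then 1 else 0) := by
  have h₁ := sum_Icc_smul_E_apply k 2 (k+1) 0 1 (fun _ => 1) a b
  have h₂ := sum_Icc_smul_E_apply k 2 (k+1) 1 0 (fun _ => 1) a b
  simp only [one_smul, add_zero] at h₁ h₂
  rw [Hinf, Finset.sum_add_distrib, Matrix.add_apply, h₁, h₂]
  have := a.isLt
  have := b.isLt
  split_ifs <;> first | omega | norm_num

theorem Cmat_apply (k : ℕ) (q : ℂ) (a b : Fin (k+1)) :
    Cmat k q a b =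
      (if (b : ℕ) = a then (qnum q (a + 1))⁻¹ else 0)
        - (if (b : ℕ) = a + 1 then (qnum q (a + 2))⁻¹ else 0) := by
  have h₁ := sum_Icc_smul_E_apply k 2 (k+2) 0 0 (fun p => (qnum q (p-1))⁻¹) a b
  have h₂ := sum_Icc_smul_E_apply k 2 (k+1) 0 1 (fun p => (qnum q p)⁻¹) a b
  simp only [add_zero, Nat.sub_zero] at h₁ h₂
  rw [Cmat, Matrix.sub_apply, h₁, h₂]
  have := a.isLt
  have := b.isLt
  split_ifs <;> first | omega | simp

theorem Cmat_isUpperTriangular (k : ℕ) (q : ℂ) : (Cmat k q).IsUpperTriangular :=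
  fun a b hba => by
    rw [Cmat_apply, if_neg (by simp at hba; omega), if_neg (by simp at hba; omega), sub_zero]

theorem isUnit_Cmat (k : ℕ) (q : ℂ) (hgen : ∀ m : ℕ, 1 ≤ m → m ≤ k + 1 → qnum q m ≠ 0) :
    IsUnit (Cmat k q) := by
  rw [isUnit_iff_isUnit_det, det_of_isUpperTriangular (Cmat_isUpperTriangular k q),
    isUnit_iff_ne_zero, Finset.prod_ne_zero_iff]
  intro a _
  rw [Cmat_apply, if_pos rfl, if_neg (by omega), sub_zero]
  exact inv_ne_zero (hgen _ (by omega) (by omega))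

theorem qnum_zero (q : ℂ) : qnum q 0 = 0 := by simp [qnum]

theorem qnum_add_two (q : ℂ) (n : ℕ) :
    qnum q (n + 2) = (q + q⁻¹) * qnum q (n + 1) - qnum q n := by
  rcases eq_or_ne q 0 with rfl | hq
  · simp [qnum]
  · rw [qnum, qnum, qnum, ← mul_div_assoc, ← sub_div]
    congr 1
    linear_combination (q⁻¹ ^ n - q ^ n) * mul_inv_cancel₀ hq

noncomputable def hamiltonian (k : ℕ) (q : ℂ) : Matrix (Fin (k+1)) (Fin (k+1)) ℂ :=
  (∑ p ∈ Icc 1 (k+1), rho k q p) - (q * k - q⁻¹) • 1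

theorem hamiltonian_apply (k : ℕ) (q : ℂ) (a b : Fin (k+1)) :
    hamiltonian k q a b =
      if (b : ℕ) = a then
        q + q⁻¹ - qnum q (a + 2) / qnum q (a + 1)
          - if (a : ℕ) < k then qnum q (a + 1) / qnum q (a + 2) else 0
      else if (b : ℕ) = a + 1 then qnum q (a + 1) / qnum q (a + 2)
      else if (a : ℕ) = b + 1 then qnum q (a + 2) / qnum q (a + 1)
      else 0 := by
  have h₁ := sum_Icc_smul_E_apply k 1 (k+1) 0 1 (fun p => qnum q (p-1) / qnum q p) a b
  have h₂ := sum_Icc_smul_E_apply k 1 (k+1) 0 0 (fun p => qnum q (p-1) / qnum q p) a b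
  have h₃ := sum_Icc_smul_E_apply k 1 (k+1) 1 0 (fun p => qnum q (p+1) / qnum q p) a b
  have h₄ := sum_Icc_smul_E_apply k 1 (k+1) 1 1 (fun p => qnum q (p+1) / qnum q p) a b
  have hsub : (a : ℕ) + 2 - 1 = a + 1 := rfl
  simp only [add_zero, Nat.sub_zero, hsub] at h₁ h₂ h₃ h₄
  simp only [hamiltonian, rho, smul_sub, Finset.sum_add_distrib, Finset.sum_sub_distrib,
    Matrix.sub_apply, Matrix.add_apply, h₁, h₂, h₃, h₄, Finset.sum_const, Nat.card_Icc,
    Nat.add_sub_cancel, Matrix.smul_apply, Matrix.one_apply, smul_eq_mul, Fin.val_inj]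
  have := a.isLt
  have := b.isLt
  split_ifs <;> first | omega | ring

theorem transpose_Cmat_mul_hamiltonian (k : ℕ) (q : ℂ)
    (hgen : ∀ m : ℕ, 1 ≤ m → m ≤ k + 1 → qnum q m ≠ 0) :
    (Cmat k q)ᵀ * hamiltonian k q = Hinf k * (Cmat k q)ᵀ := by
  ext a b
  rw [mul_apply, mul_apply]
  simp only [transpose_apply]
  conv_lhs =>
    simp only [Cmat_apply, sub_mul, ite_mul, zero_mul, Finset.sum_sub_distrib, Fin.val_inj]
  conv_rhs =>
    simp only [Hinf_apply, add_mul, ite_mul, one_mul, zero_mul, Finset.sum_add_distrib]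
  rw [Finset.sum_ite_eq, Fin.sum_ite_val_eq_val_add_one, Fin.sum_ite_val_add_one_eq_val,
    Fin.sum_ite_val_eq_val_add_one]
  simp only [Finset.mem_univ, if_true, Cmat_apply, hamiltonian_apply]
  obtain ⟨i, hi⟩ := a
  obtain ⟨j, hj⟩ := b
  -- With `q + q⁻¹` opaque, every entry is a rational identity in two consecutive q-numbers
  -- once the recurrence has eliminated the higher ones.
  have hrec := qnum_add_two q
  generalize q + q⁻¹ = t at hrec ⊢
  rcases i with _ | i <;> simp only [Nat.add_sub_cancel] <;> split_ifs <;>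
    first | contradiction | omega | skip
  all_goals subst_vars
  all_goals field_simp (disch := exact hgen _ (by omega) (by omega))
  all_goals (try simp only [hrec, qnum_zero]); ring

noncomputable def sinVec (k : ℕ) (θ : ℝ) : Fin (k+1) → ℂ :=
  fun a => (Real.sin (((a : ℕ) + 1 : ℕ) * θ) : ℂ)

theorem sinVec_ne_zero (k : ℕ) {θ : ℝ} (h0 : 0 < θ) (hπ : θ < Real.pi) : sinVec k θ ≠ 0 := by
  intro h
  have h0' := congrFun h 0
  simp only [sinVec, Fin.val_zero, zero_add, Nat.cast_one, one_mul, Pi.zero_apply,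
    Complex.ofReal_eq_zero] at h0'
  exact (Real.sin_pos_of_pos_of_lt_pi h0 hπ).ne' h0'

theorem Hinf_mulVec_sinVec (k : ℕ) {θ : ℝ} (hθ : Real.sin ((k + 2 : ℕ) * θ) = 0) :
    Hinf k *ᵥ sinVec k θ = ((2 * Real.cos θ : ℝ) : ℂ) • sinVec k θ := by
  funext a
  simp only [mulVec, dotProduct, Hinf_apply, add_mul, ite_mul, one_mul, zero_mul,
    Finset.sum_add_distrib, Fin.sum_ite_val_eq_val_add_one, Fin.sum_ite_val_add_one_eq_val,
    Pi.smul_apply, smul_eq_mul]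
  have hnext : (if h : (a : ℕ) + 1 < k + 1 then sinVec k θ ⟨a + 1, h⟩ else 0) =
      Real.sin ((a + 2 : ℕ) * θ) := by
    split_ifs with h
    · rfl
    · rw [show (a : ℕ) + 2 = k + 2 by omega, hθ, Complex.ofReal_zero]
  have hprev : (if h : (a : ℕ) = 0 then 0 else sinVec k θ ⟨a - 1, by omega⟩) =
      Real.sin (a * θ) := by
    split_ifs with h
    · simp [h]
    · simp only [sinVec, Nat.sub_add_cancel (Nat.one_le_iff_ne_zero.2 h)]
  have hsum : Real.sin ((a + 2 : ℕ) * θ) + Real.sin (a * θ) =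
      2 * Real.cos θ * Real.sin ((a + 1 : ℕ) * θ) := by
    push_cast
    rw [show ((a : ℝ) + 2) * θ = (a + 1) * θ + θ by ring,
      show (a : ℝ) * θ = (a + 1) * θ - θ by ring, Real.sin_add, Real.sin_sub]
    ring
  rw [hnext, hprev, sinVec, ← Complex.ofReal_add, hsum]
  push_cast
  ring

theorem cos_pi_mul_div_injOn {x : ℝ} (hx : 0 < x) :
    Set.InjOn (fun m : ℕ => Real.cos (Real.pi * m / x)) {m | (m : ℝ) ≤ x} := by
  intro m₁ hm₁ m₂ hm₂ h
  have hIcc : ∀ m : ℕ, (m : ℝ) ≤ x → Real.pi * m / x ∈ Set.Icc 0 Real.pi := fun m hm =>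
    ⟨by positivity, by rw [div_le_iff₀ hx]; nlinarith [Real.pi_pos]⟩
  have := Real.injOn_cos (hIcc m₁ hm₁) (hIcc m₂ hm₂) h
  rw [div_left_inj' hx.ne', mul_right_inj' Real.pi_ne_zero] at this
  exact_mod_cast this

theorem spectrum_Hinf (k : ℕ) :
    spectrum ℂ (Hinf k) = {x : ℂ | ∃ m : ℕ, 1 ≤ m ∧ m ≤ k + 1 ∧
      x = ((2 * Real.cos (Real.pi * m / (k + 2)) : ℝ) : ℂ)} := by
  set ev : ℕ → ℂ := fun m => ((2 * Real.cos (Real.pi * m / (k + 2)) : ℝ) : ℂ)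
  have hk : (0 : ℝ) < k + 2 := by positivity
  have hinj : Set.InjOn ev (Finset.Icc 1 (k + 1)) := fun m₁ hm₁ m₂ hm₂ h => by
    simp only [Finset.coe_Icc, Set.mem_Icc] at hm₁ hm₂
    have hcos := Complex.ofReal_injective h
    refine cos_pi_mul_div_injOn hk (show (m₁ : ℝ) ≤ k + 2 by norm_cast; omega)
      (show (m₂ : ℝ) ≤ k + 2 by norm_cast; omega) ?_
    simpa using hcos
  have hmem : ∀ m ∈ Finset.Icc 1 (k + 1), ev m ∈ spectrum ℂ (Hinf k) := by
    intro m hm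
    rw [Finset.mem_Icc] at hm
    have hθ : Real.sin ((k + 2 : ℕ) * (Real.pi * m / (k + 2))) = 0 := by
      rw [show ((k + 2 : ℕ) : ℝ) * (Real.pi * m / (k + 2)) = m * Real.pi by push_cast; field_simp]
      exact Real.sin_nat_mul_pi m
    refine mem_spectrum_of_mulVec_eq_smul (sinVec_ne_zero k ?_ ?_) (Hinf_mulVec_sinVec k hθ)
    · have : (1 : ℝ) ≤ m := by exact_mod_cast hm.1
      positivity
    · rw [div_lt_iff₀ hk]
      have : (m : ℝ) ≤ k + 1 := by exact_mod_cast hm.2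
      nlinarith [Real.pi_pos]
  rw [spectrum_eq_of_card_le (S := (Finset.Icc 1 (k + 1)).image ev)
    (by rw [Finset.coe_image]; exact Set.image_subset_iff.2 hmem)
    (by rw [Finset.card_image_of_injOn hinj]; simp)]
  ext x
  simp [ev, eq_comm, and_assoc]

theorem HH_spectrum_general (k : ℕ) (q : ℂ)
    (hgen : ∀ m : ℕ, 1 ≤ m → m ≤ k + 1 → qnum q m ≠ 0) :
    spectrum ℂ ((∑ p ∈ Finset.Icc 1 (k+1), rho k q p) - (q * k - q⁻¹) • 1) =
      {x : ℂ | ∃ m : ℕ, 1 ≤ m ∧ m ≤ k + 1 ∧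
        x = ((2 * Real.cos (Real.pi * m / (k + 2)) : ℝ) : ℂ)} := by
  change spectrum ℂ (hamiltonian k q) = _
  rw [spectrum_eq_of_mul_eq_mul ((isUnit_transpose _).2 (isUnit_Cmat k q hgen))
    (transpose_Cmat_mul_hamiltonian k q hgen), spectrum_Hinf]

/-- The spectrum of `H_{(k,1)}(q) = Σ_{p=1}^{k+1} ρ_{(k,1)}(σ_p) - (q k - q⁻¹)·1` is
`{2 cos(π m/(k+2)) : m = 1, ..., k+1}`, independent of the generic parameter `q`. -/
theorem HH_spectrum (k : ℕ) (q : ℂ) (hq : q ≠ 0)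
    (hgen : ∀ m : ℕ, 1 ≤ m → m ≤ k + 1 → qnum q m ≠ 0) :
    spectrum ℂ ((∑ p ∈ Finset.Icc 1 (k+1), rho k q p) - (q * k - q⁻¹) • 1) =
      {x : ℂ | ∃ m : ℕ, 1 ≤ m ∧ m ≤ k + 1 ∧
        x = ((2 * Real.cos (Real.pi * m / (k + 2)) : ℝ) : ℂ)} :=
  HH_spectrum_general k q hgen
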